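/- First-order operadic Stokes law: for every bilinear map μ ∈ C² and all multilinear maps f ∈ C^m, g ∈ C^n, δ_μ(f ∘ g) − f ∘ (δ_μ g) − (−1)^{|g|} (δ_μ f) ∘ g = (−1)^{|g|} (f ⌣ g − (−1)^{mn} g ⌣ f), where |g| = n − 1. -/

import Mathlib

/-! The total composition is not associative, but its associator is a sum of two braces,
`(h ∘ f) ∘ g − h ∘ (f ∘ g) = ⟨h|fg⟩ + (−1)^{|f||g|} ⟨h|gf⟩`: in `(h ∘ f) ∘ g` the terms that
insert `g` into `f` reassemble `h ∘ (f ∘ g)` (sequential axiom of the operad), and the others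
insert `f` and `g` into disjoint slots of `h` (parallel axiom). Expanding `δ_μ = −[·, μ]`, the
left side of the Stokes law is `−(f, g, μ) + (−1)^{|g|} (f, μ, g) − (−1)^{|f|+|g|} (μ, f, g)`.
The braces of the first two associators cancel, and those of the last, `⟨μ|fg⟩` and `⟨μ|gf⟩`,
are the cup products `f ⌣ g` and `g ⌣ f` up to sign. -/

open Finset

section OperadPrelude

variable {K : Type*} [CommRing K] {L : Type*} [AddCommGroup L] [Module K L]

/-- `C K L n`: the `K`-module of `n`-multilinear maps `L^n → L`
(the degree-`n` component of the endomorphism operad of `L`). -/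
abbrev C (K L : Type*) [CommRing K] [AddCommGroup L] [Module K L] (n : ℕ) :=
  MultilinearMap K (fun _ : Fin n => L) L

/-- The extension of an `n`-ary multilinear operation to sequences `ℕ → L`:
it evaluates `f` on the first `n` entries of the sequence.  Two `n`-ary
multilinear operations are equal iff their extensions are equal, so operadic
identities are stated as identities between extensions. -/
def ex {n : ℕ} (f : C K L n) : (ℕ → L) → L := fun x => f fun j => x j.1

/-- The sign `(-1)^e` for an integer exponent `e`. -/
def sgn (e : ℤ) : ℤ := (((-1 : ℤˣ) ^ e : ℤˣ) : ℤ)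

/-- Partial composition `f ∘ᵢ g`, where `n = deg g`:
`(f ∘ᵢ g)(x₀, x₁, …) = (-1)^{i(n-1)} f(x₀,…,x_{i-1}, g(x_i,…,x_{i+n-1}), x_{i+n},…)`. -/
def pc (n i : ℕ) (f g : (ℕ → L) → L) : (ℕ → L) → L :=
  fun x => sgn ((i : ℤ) * ((n : ℤ) - 1)) •
    f fun j => if j < i then x j else if j = i then g (fun k => x (i + k)) else x (j + n - 1)

/-- Total composition `f ∘ g := Σ_{i=0}^{m-1} f ∘ᵢ g`, where `m = deg f`, `n = deg g`. -/
def tc (m n : ℕ) (f g : (ℕ → L) → L) : (ℕ → L) → L :=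
  fun x => ∑ i ∈ Finset.range m, pc n i f g x

/-- The associator `(h, f, g) := (h ∘ f) ∘ g − h ∘ (f ∘ g)` of the total composition,
where `m = deg h`, `n = deg f`, `p = deg g`. -/
def assoc (m n p : ℕ) (h f g : (ℕ → L) → L) : (ℕ → L) → L :=
  fun x => tc (m + n - 1) p (tc m n h f) g x - tc m (n + p - 1) h (tc n p f g) x

/-- The brace `⟨h|fg⟩ := Σ (h ∘ᵢ f) ∘ⱼ g`, summed over `0 ≤ i ≤ m-2`,
`i + n ≤ j ≤ m + n - 2`, where `m = deg h`, `n = deg f`, `p = deg g`. -/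
def br2 (m n p : ℕ) (h f g : (ℕ → L) → L) : (ℕ → L) → L :=
  fun x => ∑ i ∈ Finset.range (m - 1), ∑ j ∈ Finset.Icc (i + n) (m + n - 2),
    pc p j (pc n i h f) g x

/-- The triple brace `⟨h|fgb⟩ := Σ ((h ∘ᵢ f) ∘ⱼ g) ∘ₖ b`, summed over `0 ≤ i ≤ m-3`,
`i + n ≤ j ≤ m + n - 3`, `j + p ≤ k ≤ m + n + p - 3`, where
`m = deg h`, `n = deg f`, `p = deg g`, `q = deg b`. -/
def br3 (m n p q : ℕ) (h f g b : (ℕ → L) → L) : (ℕ → L) → L :=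
  fun x => ∑ i ∈ Finset.range (m - 2), ∑ j ∈ Finset.Icc (i + n) (m + n - 3),
    ∑ k ∈ Finset.Icc (j + p) (m + n + p - 3),
      pc q k (pc p j (pc n i h f) g) b x

/-- The Gerstenhaber bracket `[f,g] := f ∘ g − (-1)^{|f||g|} g ∘ f`,
where `m = deg f`, `n = deg g`, `|f| = m - 1`, `|g| = n - 1`. -/
def gb (m n : ℕ) (f g : (ℕ → L) → L) : (ℕ → L) → L :=
  fun x => tc m n f g x - sgn (((m : ℤ) - 1) * ((n : ℤ) - 1)) • tc n m g f x

/-- The cup product `f ⌣ g := (-1)^{deg f} (μ ∘₀ f) ∘_{deg f} g`,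
where `m = deg f`, `n = deg g`. -/
def cup (μ : C K L 2) (m n : ℕ) (f g : (ℕ → L) → L) : (ℕ → L) → L :=
  fun x => sgn (m : ℤ) • pc n m (pc m 0 (ex μ) f) g x

/-- The coboundary operator `δ_μ f := −[f, μ]`, where `m = deg f`. -/
def delta (μ : C K L 2) (m : ℕ) (f : (ℕ → L) → L) : (ℕ → L) → L :=
  fun x => - gb m 2 f (ex μ) x

theorem sgn_add (a b : ℤ) : sgn (a + b) = sgn a * sgn b := by
  simp [sgn, zpow_add]

theorem sgn_mul_self (a : ℤ) : sgn a * sgn a = 1 := by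
  simp [sgn, ← Units.val_mul]

theorem sgn_add_two_mul (a b : ℤ) : sgn (a + 2 * b) = sgn a := by
  simp [sgn, zpow_add, zpow_mul]

theorem sgn_sub_one (a : ℤ) : sgn (a - 1) = -sgn a := by
  simp [sgn, zpow_sub]

theorem ex_congr {n : ℕ} (f : C K L n) {x y : ℕ → L} (h : ∀ k < n, x k = y k) :
    ex f x = ex f y :=
  congrArg f (funext fun j => h j j.2)

theorem MultilinearMap.toLinearMap_congr {R ι M₂ : Type*} {M₁ : ι → Type*} [DecidableEq ι]
    [CommSemiring R] [∀ i, AddCommMonoid (M₁ i)] [AddCommMonoid M₂] [∀ i, Module R (M₁ i)]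
    [Module R M₂] (f : MultilinearMap R M₁ M₂) {v w : ∀ i, M₁ i} (i : ι)
    (h : ∀ j ≠ i, v j = w j) : f.toLinearMap v i = f.toLinearMap w i := by
  ext y
  simp only [MultilinearMap.toLinearMap_apply]
  congr 1
  funext j
  by_cases hj : j = i
  · subst hj
    simp
  · simp [hj, h j hj]

theorem pc_ex_apply {m : ℕ} (f : C K L m) {i : ℕ} (hi : i < m) (q : ℕ) (G : (ℕ → L) → L)
    (x : ℕ → L) :
    pc q i (ex f) G x = sgn (i * ((q : ℤ) - 1)) •
      f.toLinearMap (fun j : Fin m => if j < i then x j else x (j + q - 1)) ⟨i, hi⟩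
        (G fun k => x (i + k)) := by
  simp only [pc, ex, MultilinearMap.toLinearMap_apply]
  congr 2
  funext j
  rcases lt_trichotomy (j : ℕ) i with h | h | h
  · have hj : j ≠ ⟨i, hi⟩ := fun e => h.ne (congrArg Fin.val e)
    simp [h, hj]
  · simp [show j = ⟨i, hi⟩ from Fin.ext h]
  · have hj : j ≠ ⟨i, hi⟩ := fun e => h.ne' (congrArg Fin.val e)
    simp [h.ne', hj, h.not_gt]

theorem pc_sum_left {ι : Type*} (q i : ℕ) (s : Finset ι) (F : ι → (ℕ → L) → L)
    (G : (ℕ → L) → L) : pc q i (∑ a ∈ s, F a) G = ∑ a ∈ s, pc q i (F a) G := by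
  funext x
  simp [pc, smul_sum]

theorem pc_ex_sum_right {ι : Type*} {m : ℕ} (f : C K L m) {i : ℕ} (hi : i < m) (q : ℕ)
    (s : Finset ι) (G : ι → (ℕ → L) → L) :
    pc q i (ex f) (∑ a ∈ s, G a) = ∑ a ∈ s, pc q i (ex f) (G a) := by
  funext x
  simp [pc_ex_apply f hi, smul_sum]

theorem pc_pc_sequential {m b : ℕ} (f : C K L m) {i t : ℕ} (hi : i < m) (ht : t < b)
    (G H : (ℕ → L) → L) (p : ℕ) :
    pc p (i + t) (pc b i (ex f) G) H = pc (b + p - 1) i (ex f) (pc p t G H) := by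
  funext x
  rw [pc, pc_ex_apply f hi, pc_ex_apply f hi, pc, map_zsmul, smul_smul, smul_smul, ← sgn_add,
    ← sgn_add]
  congr 1
  · congr 1
    rw [Nat.cast_sub (by omega)]
    push_cast
    ring
  · congr 1
    · refine f.toLinearMap_congr _ fun j hj => ?_
      replace hj : (j : ℕ) ≠ i := fun e => hj (Fin.ext e)
      split_ifs <;> first | rfl | omega | (congr 1; omega)
    · congr 1
      funext k
      split_ifs <;> first | rfl | omega | (congr 1; omega) | (congr 1; funext l; congr 1; omega)

theorem pc_pc_parallel {b : ℕ} (g : C K L b) (F H : (ℕ → L) → L) (p i s : ℕ) :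
    pc b i (pc p (i + s + 1) F H) (ex g)
      = sgn (((b : ℤ) - 1) * ((p : ℤ) - 1)) • pc p (i + b + s) (pc b i F (ex g)) H := by
  funext x
  simp only [pc, Pi.smul_apply, smul_smul, ← sgn_add]
  congr 1
  · rw [← sgn_add_two_mul _ (((b : ℤ) - 1) * ((p : ℤ) - 1))]
    congr 1
    push_cast
    ring
  · congr 1
    funext j
    split_ifs
    all_goals first
      | rfl
      | omega
      | (congr 1; omega)
      | (exact ex_congr g fun k hk => by split_ifs <;> first | rfl | omega)
      | (congr 1; funext l; split_ifs <;> first | omega | (congr 1; omega))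

theorem tc_eq_sum (m n : ℕ) (F G : (ℕ → L) → L) : tc m n F G = ∑ i ∈ range m, pc n i F G := by
  funext x
  simp [tc]

theorem Finset.sum_range_sum_range_comm {M : Type*} [AddCommMonoid M] (m : ℕ)
    (A : ℕ → ℕ → M) :
    ∑ i ∈ range m, ∑ k ∈ range i, A i k
      = ∑ k ∈ range m, ∑ s ∈ range (m - 1 - k), A (k + s + 1) k := by
  simp only [range_eq_Ico]
  rw [← sum_Ico_Ico_comm' 0 m fun k i => A i k]
  refine sum_congr rfl fun k _ => ?_
  rw [sum_Ico_eq_sum_range, ← range_eq_Ico, Nat.sub_sub, add_comm 1 k]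
  simp only [add_right_comm k 1]

theorem br2_eq_sum (m n p : ℕ) (h f g : (ℕ → L) → L) :
    br2 m n p h f g
      = ∑ i ∈ range m, ∑ s ∈ range (m - 1 - i), pc p (i + n + s) (pc n i h f) g := by
  funext x
  rcases m with _ | m
  · simp [br2]
  rw [sum_range_succ, Nat.add_sub_cancel, Nat.sub_self, range_zero, sum_empty, add_zero]
  simp only [br2, Finset.sum_apply, Nat.add_sub_cancel]
  refine sum_congr rfl fun i hi => ?_
  rw [mem_range] at hi
  rw [← Ico_add_one_right_eq_Icc, sum_Ico_eq_sum_range,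
    show m + 1 + n - 2 + 1 - (i + n) = m - i by omega]

theorem assoc_eq_sub (m n p : ℕ) (h f g : (ℕ → L) → L) :
    assoc m n p h f g = tc (m + n - 1) p (tc m n h f) g - tc m (n + p - 1) h (tc n p f g) :=
  rfl

theorem assoc_ex_eq_br2_add {m n p : ℕ} (h : C K L m) (F : (ℕ → L) → L) (g : C K L p) :
    assoc m n p (ex h) F (ex g) = br2 m n p (ex h) F (ex g)
      + sgn (((n : ℤ) - 1) * ((p : ℤ) - 1)) • br2 m p n (ex h) (ex g) F := by
  have hsplit : tc (m + n - 1) p (tc m n (ex h) F) (ex g)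
      = ∑ i ∈ range m, ∑ k ∈ range i, pc p k (pc n i (ex h) F) (ex g)
        + tc m (n + p - 1) (ex h) (tc n p F (ex g)) + br2 m n p (ex h) F (ex g) := by
    simp only [tc_eq_sum, pc_sum_left, br2_eq_sum]
    rw [sum_comm, ← sum_add_distrib, ← sum_add_distrib]
    refine sum_congr rfl fun i hi => ?_
    rw [mem_range] at hi
    rw [show m + n - 1 = i + n + (m - 1 - i) by omega, sum_range_add, sum_range_add,
      pc_ex_sum_right h hi]
    congr 2
    exact sum_congr rfl fun t ht => pc_pc_sequential h hi (mem_range.mp ht) F (ex g) p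
  have hcross : ∑ i ∈ range m, ∑ k ∈ range i, pc p k (pc n i (ex h) F) (ex g)
      = sgn (((n : ℤ) - 1) * ((p : ℤ) - 1)) • br2 m p n (ex h) (ex g) F := by
    simp only [sum_range_sum_range_comm, br2_eq_sum, smul_sum, pc_pc_parallel, mul_comm]
  rw [assoc_eq_sub, hsplit, hcross]
  abel

theorem delta_eq (μ : C K L 2) (m : ℕ) (F : (ℕ → L) → L) :
    delta μ m F = -tc m 2 F (ex μ) + sgn ((m : ℤ) - 1) • tc 2 m (ex μ) F := by
  funext x
  simp [delta, gb, sub_eq_neg_add]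

/-- The sign is `(-1)^{|f ∘ g|}`, except for `m = n = 0`, where the degree `m + n - 1` truncates
to `0`; there `tc 0 n F G = 0`. -/
theorem delta_tc_eq (μ : C K L 2) (m n : ℕ) (F G : (ℕ → L) → L) :
    delta μ (m + n - 1) (tc m n F G) = -tc (m + n - 1) 2 (tc m n F G) (ex μ)
      + (sgn ((m : ℤ) - 1) * sgn ((n : ℤ) - 1)) • tc 2 (m + n - 1) (ex μ) (tc m n F G) := by
  rw [delta_eq]
  rcases m with _ | m
  · have h0 : tc 0 n F G = 0 := by
      funext x
      simp [tc]
    have h2 : tc 2 (0 + n - 1) (ex μ) 0 = 0 := by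
      funext x
      simp [tc, sum_range_succ, pc_ex_apply μ]
    rw [h0, h2, smul_zero, smul_zero]
  · rw [← sgn_add, Nat.cast_sub (by omega)]
    push_cast
    ring_nf

theorem tc_delta_left (μ : C K L 2) (m n : ℕ) (F G : (ℕ → L) → L) :
    tc (m + 1) n (delta μ m F) G = -tc (m + 1) n (tc m 2 F (ex μ)) G
      + sgn ((m : ℤ) - 1) • tc (m + 1) n (tc 2 m (ex μ) F) G := by
  funext x
  simp only [tc, Pi.add_apply, Pi.neg_apply, Pi.smul_apply, smul_sum, ← sum_neg_distrib,
    ← sum_add_distrib]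
  refine sum_congr rfl fun i _ => ?_
  simp only [pc, delta_eq, Pi.add_apply, Pi.neg_apply, Pi.smul_apply]
  module

theorem tc_ex_delta_right (μ : C K L 2) {m : ℕ} (f : C K L m) (n : ℕ) (G : (ℕ → L) → L) :
    tc m (n + 1) (ex f) (delta μ n G) = -tc m (n + 1) (ex f) (tc n 2 G (ex μ))
      + sgn ((n : ℤ) - 1) • tc m (n + 1) (ex f) (tc 2 n (ex μ) G) := by
  funext x
  simp only [tc, Pi.add_apply, Pi.neg_apply, Pi.smul_apply, smul_sum, ← sum_neg_distrib,
    ← sum_add_distrib]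
  refine sum_congr rfl fun i hi => ?_
  simp only [pc_ex_apply f (mem_range.mp hi), delta_eq, Pi.add_apply, Pi.neg_apply,
    Pi.smul_apply, map_add, map_neg, map_zsmul]
  module

theorem cup_eq_sgn_smul_br2 (μ : C K L 2) (m n : ℕ) (F G : (ℕ → L) → L) :
    cup μ m n F G = sgn m • br2 2 m n (ex μ) F G := by
  funext x
  simp [cup, br2]

/-- the first-order operadic Stokes law
`δ̄⟨f|g⟩ = (-1)^{|g|} (f ⌣ g − (-1)^{mn} g ⌣ f)`. -/
theorem first_order_operadic_stokes_law
    (μ : C K L 2) {m n : ℕ} (f : C K L m) (g : C K L n) :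
    delta μ (m + n - 1) (tc m n (ex f) (ex g))
        - tc m (n + 1) (ex f) (delta μ n (ex g))
        - sgn ((n : ℤ) - 1) • tc (m + 1) n (delta μ m (ex f)) (ex g)
      = sgn ((n : ℤ) - 1) •
          (cup μ m n (ex f) (ex g)
            - sgn ((m : ℤ) * (n : ℤ)) • cup μ n m (ex g) (ex f)) := by
  have hfgμ := assoc_ex_eq_br2_add (n := n) f (ex g) μ
  have hfμg := assoc_ex_eq_br2_add (n := 2) f (ex μ) g
  have hμfg := assoc_ex_eq_br2_add (n := m) μ (ex f) g
  simp only [assoc_eq_sub, show m + 2 - 1 = m + 1 by omega, show 2 + n - 1 = n + 1 by omega,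
    show 2 + m - 1 = m + 1 by omega, show n + 2 - 1 = n + 1 by omega, Nat.cast_ofNat,
    show (2 : ℤ) - 1 = 1 by norm_num, mul_one, one_mul] at hfgμ hfμg hμfg
  rw [delta_tc_eq, tc_ex_delta_right, tc_delta_left, cup_eq_sgn_smul_br2, cup_eq_sgn_smul_br2]
  linear_combination (norm := skip) -hfgμ + sgn ((n : ℤ) - 1) • hfμg
    - (sgn ((m : ℤ) - 1) * sgn ((n : ℤ) - 1)) • hμfg
  have hσ := sgn_mul_self ((n : ℤ) - 1)
  have hm := sgn_sub_one (m : ℤ)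
  have hmn : sgn ((m : ℤ) * n) * sgn (n : ℤ)
      = sgn ((m : ℤ) - 1) * sgn (((m : ℤ) - 1) * ((n : ℤ) - 1)) := by
    rw [← sgn_add, ← sgn_add, ← sgn_add_two_mul ((m : ℤ) * n + n) (-(n : ℤ))]
    ring_nf
  match_scalars <;> grind

end OperadPrelude
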